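/- (Theorem 1, KL upper bound.) Let I be a nonempty finite set indexing MCMC draws, let f_π and q be probability mass functions on I with f_π(k), q(k) > 0 for all k, and let Pⱼ(k) ∈ (0,1) for j = 1,…,m be classifier probabilities with ∑ⱼ₌₁ᵐ Pⱼ(k) = 1 for each k. Define w(k) = exp(log m + (1/m)∑ⱼ log Pⱼ(k)), C_f = ∑ₖ w(k), and f(k) = w(k)/C_f. Then there exists H > 0, depending only on f_π and q (not on the Pⱼ), such that (1/H)·KL(f_π‖f) ≤ log(C_f/m) − (1/m)∑ₖ q(k)∑ⱼ₌₁ᵐ log Pⱼ(k). -/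
import Mathlib


open Finset

/-- Theorem 1 (KL upper bound): there is a constant `H > 0` depending only on the
full-posterior weights `fπ` and the sub-posterior weights `q` (not on the classifier
probabilities `P`) such that `(1/H) · KL(fπ‖f) ≤ log(C_f/m) − (1/m)∑ₖ q(k)∑ⱼ log P j k`. -/
theorem stmt_12 {I : Type*} [Fintype I] (hI : 2 ≤ Fintype.card I)
    (m : ℕ) (hm : 1 ≤ m)
    (fπ q : I → ℝ)
    (hfπ : ∀ k, 0 < fπ k) (hfπsum : ∑ k, fπ k = 1)
    (hq : ∀ k, 0 < q k) (hqsum : ∑ k, q k = 1) :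
    ∃ H : ℝ, 0 < H ∧
      ∀ (P : Fin m → I → ℝ), (∀ j k, 0 < P j k ∧ P j k < 1) → (∀ k, ∑ j, P j k = 1) →
        ∀ (w : I → ℝ),
          (∀ k, w k = Real.exp (Real.log m + ((1 : ℝ) / m) * ∑ j, Real.log (P j k))) →
        ∀ (Cf : ℝ), Cf = ∑ k', w k' →
        ∀ (f : I → ℝ), (∀ k, f k = w k / Cf) →
          (1 / H) * (∑ k, fπ k * Real.log (fπ k / f k))
            ≤ Real.log (Cf / m) - ((1 : ℝ) / m) * ∑ k, q k * ∑ j, Real.log (P j k) := by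
  have hne' : (Finset.univ : Finset I).Nonempty := by
    rw [Finset.univ_nonempty_iff, ← Fintype.card_pos_iff]; omega
  set H : ℝ := max 1 (univ.sup' hne' fun k => fπ k / q k) with hH
  have hHpos : 0 < H := lt_of_lt_of_le one_pos (le_max_left _ _)
  refine ⟨H, hHpos, ?_⟩
  intro P hP hPsum w hw Cf hCf f hf
  have hmpos : (0:ℝ) < m := by exact_mod_cast Nat.lt_of_lt_of_le Nat.zero_lt_one hm
  have hwpos : ∀ k, 0 < w k := fun k => (hw k) ▸ Real.exp_pos _
  have hCfpos : 0 < Cf := hCf ▸ Finset.sum_pos (fun k _ => hwpos k) hne'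
  have hwlt : ∀ k, w k < Cf := by
    intro k
    obtain ⟨k', hk'⟩ := Fintype.exists_ne_of_one_lt_card (by omega) k
    rw [hCf]
    exact Finset.single_lt_sum hk' (mem_univ k) (mem_univ k') (hwpos k')
      (fun j _ _ => (hwpos j).le)
  have hfpos : ∀ k, 0 < f k := fun k => (hf k) ▸ div_pos (hwpos k) hCfpos
  have hflt : ∀ k, f k < 1 := fun k => (hf k) ▸ (div_lt_one hCfpos).mpr (hwlt k)
  have hlogw : ∀ k, Real.log (w k) = Real.log m + ((1:ℝ)/m) * ∑ j, Real.log (P j k) :=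
    fun k => by rw [hw k, Real.log_exp]
  -- g k := -log (f k)
  set g : I → ℝ := fun k => Real.log Cf - Real.log (w k) with hg
  have hgnonneg : ∀ k, 0 ≤ g k := fun k =>
    sub_nonneg.mpr (Real.log_le_log (hwpos k) (hwlt k).le)
  have hlogf : ∀ k, Real.log (f k) = -(g k) := fun k => by
    rw [hf k, Real.log_div (hwpos k).ne' hCfpos.ne', hg]; ring
  -- RHS = ∑ q k * g k
  have hRHS : Real.log (Cf / m) - ((1:ℝ)/m) * ∑ k, q k * ∑ j, Real.log (P j k)
      = ∑ k, q k * g k := by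
    have e1 : ∀ k, q k * g k
        = q k * Real.log Cf - q k * Real.log m - ((1:ℝ)/m) * (q k * ∑ j, Real.log (P j k)) := by
      intro k
      rw [hg]
      simp only []
      rw [hlogw k]
      ring
    rw [Finset.sum_congr rfl (fun k _ => e1 k)]
    rw [Finset.sum_sub_distrib, Finset.sum_sub_distrib, ← Finset.sum_mul, ← Finset.sum_mul,
      hqsum, ← Finset.mul_sum, Real.log_div hCfpos.ne' hmpos.ne']
    ring
  rw [hRHS, one_div, inv_mul_le_iff₀ hHpos]
  -- KL ≤ H * ∑ q g
  have hfπle1 : ∀ k, fπ k ≤ 1 := by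
    intro k
    rw [← hfπsum]
    exact Finset.single_le_sum (fun j _ => (hfπ j).le) (mem_univ k)
  have hfπH : ∀ k, fπ k ≤ H * q k := by
    intro k
    have h1 : fπ k / q k ≤ H :=
      le_trans (Finset.le_sup' (fun k => fπ k / q k) (mem_univ k)) (le_max_right _ _)
    calc fπ k = (fπ k / q k) * q k := (div_mul_cancel₀ _ (hq k).ne').symm
    _ ≤ H * q k := mul_le_mul_of_nonneg_right h1 (hq k).le
  calc ∑ k, fπ k * Real.log (fπ k / f k)
      = ∑ k, (fπ k * Real.log (fπ k) + fπ k * g k) := by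
        refine Finset.sum_congr rfl fun k _ => ?_
        rw [Real.log_div (hfπ k).ne' (hfpos k).ne', hlogf k]; ring
    _ ≤ ∑ k, (0 + H * (q k * g k)) := by
        refine Finset.sum_le_sum fun k _ => add_le_add ?_ ?_
        · exact mul_nonpos_of_nonneg_of_nonpos (hfπ k).le
            (Real.log_nonpos (hfπ k).le (hfπle1 k))
        · rw [← mul_assoc]
          exact mul_le_mul_of_nonneg_right (hfπH k) (hgnonneg k)
    _ = H * ∑ k, q k * g k := by simp [Finset.mul_sum]
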